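/- arXiv:2206.06344 — 3 statements merged into one kernel-verified Lean document; each statement's English description precedes it below -/
import Mathlib

section
/- Let d₁,…,d_r > 0 be the nonzero singular values of a design matrix X and let λ, λ̃ ≥ 0. If the two notions of degrees of freedom agree, i.e. Σ_{j=1}^r [ 2 d_j²/(d_j² + λ) − d_j⁴/(d_j² + λ)² ] = Σ_{j=1}^r d_j²/(d_j² + λ̃), then λ ≥ λ̃. (Thus regularizing based on df(λ) = tr(2H_λ − H_λᵀH_λ) leads to at least as much shrinkage as regularizing based on d̃f(λ̃) = tr(H_λ̃).) -/
open Finset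

/-- If the two notions of degrees of freedom agree, i.e.
`∑ⱼ [2dⱼ²/(dⱼ²+λ) − dⱼ⁴/(dⱼ²+λ)²] = ∑ⱼ dⱼ²/(dⱼ²+λ̃)` for the nonzero singular values
`d₁,…,d_r > 0` of a design matrix, then `λ ≥ λ̃`: regularizing based on
`df(λ) = tr(2H_λ − H_λᵀH_λ)` shrinks at least as much as `d̃f(λ̃) = tr(H_λ̃)`. -/
theorem df_shrinks_more_than_trace_df (r : ℕ) (hr : 0 < r)
    (d : Fin r → ℝ) (hd : ∀ j, 0 < d j)
    (lam lamt : ℝ) (hlam : 0 ≤ lam) (hlamt : 0 ≤ lamt)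
    (h : ∑ j : Fin r, (2 * (d j) ^ 2 / ((d j) ^ 2 + lam) - (d j) ^ 4 / ((d j) ^ 2 + lam) ^ 2)
        = ∑ j : Fin r, (d j) ^ 2 / ((d j) ^ 2 + lamt)) :
    lamt ≤ lam := by
  by_contra hc
  push_neg at hc
  have key : ∑ j : Fin r, (d j) ^ 2 / ((d j) ^ 2 + lamt)
      < ∑ j : Fin r, (2 * (d j) ^ 2 / ((d j) ^ 2 + lam) - (d j) ^ 4 / ((d j) ^ 2 + lam) ^ 2) := by
    apply Finset.sum_lt_sum_of_nonempty
    · exact Finset.univ_nonempty_iff.mpr ⟨⟨0, hr⟩⟩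
    · intro j _
      have hdj := hd j
      have h1 : 0 < (d j) ^ 2 + lam := by positivity
      have h2 : 0 < (d j) ^ 2 + lamt := by nlinarith
      rw [div_lt_iff₀ h2]
      have e1 : 2 * (d j) ^ 2 / ((d j) ^ 2 + lam) - (d j) ^ 4 / ((d j) ^ 2 + lam) ^ 2
          = (2 * (d j) ^ 2 * ((d j) ^ 2 + lam) - (d j) ^ 4) / ((d j) ^ 2 + lam) ^ 2 := by
        field_simp
      rw [e1, div_mul_eq_mul_div, lt_div_iff₀ (by positivity)]
      nlinarith [mul_pos (mul_pos (mul_pos hdj hdj) (mul_pos hdj hdj)) (sub_pos.mpr hc),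
        mul_nonneg (mul_nonneg hlam (sub_pos.mpr hc).le) (sq_nonneg (d j)),
        mul_nonneg (mul_nonneg hlam hlam) (sq_nonneg (d j)),
        mul_nonneg hlam (mul_pos (mul_pos hdj hdj) (mul_pos hdj hdj)).le]
  linarith [h ▸ key]
end

section
/- Let X ∈ ℝ^{n×p} have rank r ≤ p with nonzero singular values d₁,…,d_r > 0 and nonzero columns x₁,…,x_p with d̄_j = ‖x_j‖₂ > 0. Then there exist mixing parameters α₁, α₂ ∈ (0,1) with the following properties: (i) whenever penalties λ₁,…,λ_p ≥ 0 and μ ≥ 0 satisfy df(λ_j) = α₁ for all j ≤ p and df(μ) = 1 − α₁, then for every y ∈ ℝⁿ, min_{j ≤ p} RSS(λ_j) ≤ RSS(μ); and (ii) whenever penalties λ₁,…,λ_p ≥ 0 and μ ≥ 0 satisfy df(λ_j) = α₂ for all j ≤ p and df(μ) = 1 − α₂, then for every y ∈ ℝⁿ, RSS(μ) ≤ min_{j ≤ p} RSS(λ_j). -/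
open Matrix Finset

/-- RSS of the ridge (group) base-learner with design matrix `X` and penalty `μ`:
`β̂_μ = (XᵀX + μI)⁻¹Xᵀy`, `RSS(μ) = (y − Xβ̂_μ)ᵀ(y − Xβ̂_μ)`. -/
noncomputable def rssGroup {n p : ℕ} (X : Matrix (Fin n) (Fin p) ℝ) (mu : ℝ)
    (y : Fin n → ℝ) : ℝ :=
  (y - X *ᵥ (((Xᵀ * X + mu • 1)⁻¹ * Xᵀ) *ᵥ y)) ⬝ᵥ (y - X *ᵥ (((Xᵀ * X + mu • 1)⁻¹ * Xᵀ) *ᵥ y))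

/-- RSS of an individual ridge base-learner with column `x` and penalty `λ`:
`β̂_λ = (xᵀx + λ)⁻¹xᵀy`, `RSS(λ) = (y − xβ̂_λ)ᵀ(y − xβ̂_λ)`. -/
noncomputable def rssInd {n : ℕ} (x : Fin n → ℝ) (lam : ℝ) (y : Fin n → ℝ) : ℝ :=
  (y - ((x ⬝ᵥ x + lam)⁻¹ * (x ⬝ᵥ y)) • x) ⬝ᵥ (y - ((x ⬝ᵥ x + lam)⁻¹ * (x ⬝ᵥ y)) • x)

/-- Degrees of freedom of an individual base-learner whose column has squared norm
`dsq = d̄²`: `df(λ) = 2d̄²/(d̄²+λ) − d̄⁴/(d̄²+λ)²`. -/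
noncomputable def dfInd (dsq lam : ℝ) : ℝ :=
  2 * dsq / (dsq + lam) - dsq ^ 2 / (dsq + lam) ^ 2

/-- Degrees of freedom of the group base-learner with singular values `d`:
`df(μ) = ∑ⱼ (2dⱼ²/(dⱼ²+μ) − dⱼ⁴/(dⱼ²+μ)²)`. -/
noncomputable def dfGroup {p : ℕ} (d : Fin p → ℝ) (mu : ℝ) : ℝ :=
  ∑ j : Fin p, (2 * (d j) ^ 2 / ((d j) ^ 2 + mu) - (d j) ^ 4 / ((d j) ^ 2 + mu) ^ 2)

/-! Write `X = U diag(d) Vᵀ` and `w = Uᵀ y`. The group learner shrinks each coordinate of `w`,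
so `RSS(μ) = ‖y‖² - ∑ₖ cₖ wₖ²` with `cₖ` the summands of `df(μ)`, while an individual learner with
`df(λⱼ) = α` has `RSS(λⱼ) = ‖y‖² - α (xⱼᵀy)² / ‖xⱼ‖²`. Both gains are compared with the squared
norm `Q` of `w` on the support of `d`. By Cauchy–Schwarz `(xⱼᵀy)² / ‖xⱼ‖² ≤ Q`, and since
`∑ⱼ (xⱼᵀy)² = ∑ₖ dₖ² wₖ² ≥ (min dₖ²) Q` while `∑ⱼ ‖xⱼ‖² = ∑ₖ dₖ²`, the best column has gain at
least `(min dₖ² / ∑ₖ dₖ²) Q`. On the group side every `cₖ ≤ df(μ) = 1 - α`, so its gain is at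
most `(1 - α) Q`; and for small `α` the equation `df(μ) = 1 - α` caps `μ`, which keeps every
`cₖ ≥ α` on the support and the gain at least `α Q`. Hence `α` close to `1` favours the individual
learners and `α` close to `0` the group learner. -/

section DegreesOfFreedom

variable {a μ : ℝ}

lemma dfInd_eq_two_mul_sub_sq (a μ : ℝ) :
    dfInd a μ = 2 * (a / (a + μ)) - (a / (a + μ)) ^ 2 := by
  rw [dfInd, div_pow]; ring

@[simp] lemma dfInd_zero_left (μ : ℝ) : dfInd 0 μ = 0 := by simp [dfInd]

lemma dfInd_zero_right (ha : a ≠ 0) : dfInd a 0 = 1 := by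
  simp [dfInd_eq_two_mul_sub_sq, ha]; norm_num

lemma div_add_le_dfInd (ha : 0 ≤ a) (hμ : 0 ≤ μ) : a / (a + μ) ≤ dfInd a μ := by
  have h0 : 0 ≤ a / (a + μ) := by positivity
  have h1 : a / (a + μ) ≤ 1 := div_le_one_of_le₀ (by linarith) (by positivity)
  rw [dfInd_eq_two_mul_sub_sq]; nlinarith

lemma dfInd_nonneg (ha : 0 ≤ a) (hμ : 0 ≤ μ) : 0 ≤ dfInd a μ :=
  (by positivity : 0 ≤ a / (a + μ)).trans (div_add_le_dfInd ha hμ)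

lemma dfInd_le_two_mul_div (ha : 0 ≤ a) (hμ : 0 < μ) : dfInd a μ ≤ 2 * a / μ := by
  have : a / (a + μ) ≤ a / μ := div_le_div_of_nonneg_left ha hμ (by linarith)
  rw [dfInd_eq_two_mul_sub_sq, mul_div_assoc]; nlinarith [sq_nonneg (a / (a + μ))]

end DegreesOfFreedom

lemma rssInd_eq_sub {n : ℕ} (x : Fin n → ℝ) (lam : ℝ) (y : Fin n → ℝ) :
    rssInd x lam y = y ⬝ᵥ y - dfInd (x ⬝ᵥ x) lam * ((x ⬝ᵥ y) ^ 2 / (x ⬝ᵥ x)) := by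
  by_cases hx : x = 0
  · simp [rssInd, hx]
  have hxx : x ⬝ᵥ x ≠ 0 := fun h => hx (dotProduct_self_eq_zero.mp h)
  simp only [rssInd, dfInd, dotProduct_sub, sub_dotProduct, dotProduct_smul, smul_dotProduct,
    smul_eq_mul, dotProduct_comm x y, div_eq_mul_inv, ← inv_pow]
  linear_combination (2 * (x ⬝ᵥ x + lam)⁻¹ * (y ⬝ᵥ x) ^ 2
    - (x ⬝ᵥ x) * (x ⬝ᵥ x + lam)⁻¹ ^ 2 * (y ⬝ᵥ x) ^ 2) * mul_inv_cancel₀ hxx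

lemma dotProduct_self_mul_sq_div {n : ℕ} (x y : Fin n → ℝ) :
    (x ⬝ᵥ x) * ((x ⬝ᵥ y) ^ 2 / (x ⬝ᵥ x)) = (x ⬝ᵥ y) ^ 2 := by
  by_cases hx : x = 0
  · simp [hx]
  exact mul_div_cancel₀ _ fun h => hx (dotProduct_self_eq_zero.mp h)

lemma exists_pos_le_sq_of_ne_zero {ι : Type*} [Fintype ι] (d : ι → ℝ) :
    ∃ m > 0, ∀ k, d k ≠ 0 → m ≤ d k ^ 2 := by
  classical
  rcases (univ.filter fun k => d k ≠ 0).eq_empty_or_nonempty with h | h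
  · exact ⟨1, one_pos, fun k hk => absurd h (ne_empty_of_mem (mem_filter.mpr ⟨mem_univ k, hk⟩))⟩
  obtain ⟨k₀, hk₀, hmin⟩ := exists_min_image _ (fun k => d k ^ 2) h
  exact ⟨d k₀ ^ 2, sq_pos_of_ne_zero (mem_filter.mp hk₀).2,
    fun k hk => hmin k (mem_filter.mpr ⟨mem_univ k, hk⟩)⟩

lemma mul_sum_sq_indicator_support_le {ι : Type*} [Fintype ι] {d : ι → ℝ} {m : ℝ}
    (hmd : ∀ k, d k ≠ 0 → m ≤ d k ^ 2) (w : ι → ℝ) :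
    m * ∑ k, (Function.support d).indicator w k ^ 2 ≤ ∑ k, d k ^ 2 * w k ^ 2 := by
  rw [mul_sum]
  refine sum_le_sum fun k _ => ?_
  by_cases hk : d k = 0
  · simp [hk]
  · simpa [hk] using mul_le_mul_of_nonneg_right (hmd k hk) (sq_nonneg (w k))

section GroupDegreesOfFreedom

variable {p : ℕ} {d : Fin p → ℝ} {μ α : ℝ}

lemma dfGroup_eq_sum_dfInd (d : Fin p → ℝ) (μ : ℝ) :
    dfGroup d μ = ∑ k, dfInd (d k ^ 2) μ := by
  unfold dfGroup dfInd; congr! 2 with k; ring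

lemma dfInd_le_dfGroup (hμ : 0 ≤ μ) (k : Fin p) : dfInd (d k ^ 2) μ ≤ dfGroup d μ := by
  rw [dfGroup_eq_sum_dfInd]
  exact single_le_sum (fun k _ => dfInd_nonneg (sq_nonneg _) hμ) (mem_univ k)

lemma dfGroup_le_two_mul_div (hμ : 0 < μ) : dfGroup d μ ≤ 2 * (∑ k, d k ^ 2) / μ := by
  rw [dfGroup_eq_sum_dfInd, mul_sum, sum_div]
  exact sum_le_sum fun k _ => dfInd_le_two_mul_div (sq_nonneg _) hμ

/-- At `μ = 0` every nonzero singular value carries a full degree of freedom. -/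
lemma pos_of_dfGroup_eq (hα : α ∈ Set.Ioo 0 1) (hμ : 0 ≤ μ) (h : dfGroup d μ = 1 - α) :
    0 < μ := by
  obtain ⟨k, -, hk⟩ : ∃ k ∈ univ, dfInd (d k ^ 2) μ ≠ 0 :=
    exists_ne_zero_of_sum_ne_zero (by rw [← dfGroup_eq_sum_dfInd, h]; linarith [hα.2])
  have hdk : d k ^ 2 ≠ 0 := fun h0 => hk (by rw [h0, dfInd_zero_left])
  refine hμ.lt_of_ne fun hμ0 => ?_
  have := dfInd_le_dfGroup (d := d) hμ k
  rw [h, ← hμ0, dfInd_zero_right hdk] at this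
  linarith [hα.1]

lemma sum_dfInd_mul_sq_le (hμ : 0 ≤ μ) (w : Fin p → ℝ) :
    ∑ k, dfInd (d k ^ 2) μ * w k ^ 2
      ≤ dfGroup d μ * ∑ k, (Function.support d).indicator w k ^ 2 := by
  rw [mul_sum]
  refine sum_le_sum fun k _ => ?_
  by_cases hk : d k = 0
  · simp [hk]
  · simpa [hk] using mul_le_mul_of_nonneg_right (dfInd_le_dfGroup hμ k) (sq_nonneg (w k))

lemma mul_sum_sq_indicator_le_sum_dfInd (h : ∀ k, d k ≠ 0 → α ≤ dfInd (d k ^ 2) μ)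
    (w : Fin p → ℝ) :
    α * ∑ k, (Function.support d).indicator w k ^ 2 ≤ ∑ k, dfInd (d k ^ 2) μ * w k ^ 2 := by
  rw [mul_sum]
  refine sum_le_sum fun k _ => ?_
  by_cases hk : d k = 0
  · simp [hk]
  · simpa [hk] using mul_le_mul_of_nonneg_right (h k hk) (sq_nonneg (w k))

/-- The constraint on `α` forces `μ ≤ 4 ∑ dₖ²`. -/
lemma le_dfInd_of_dfGroup_eq {m : ℝ} (hm : 0 < m) (hα : 0 < α)
    (hαm : α * (2 * m + 4 * ∑ k, d k ^ 2) ≤ m) (hμ : 0 < μ) (hdfg : dfGroup d μ = 1 - α)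
    {k : Fin p} (hmk : m ≤ d k ^ 2) : α ≤ dfInd (d k ^ 2) μ := by
  set T := ∑ k, d k ^ 2
  have hT : 0 ≤ T := sum_nonneg fun k _ => sq_nonneg (d k)
  have hμT : (1 - α) * μ ≤ 2 * T := by
    have := hdfg ▸ dfGroup_le_two_mul_div (d := d) hμ
    rwa [le_div_iff₀ hμ] at this
  have hα_half : α ≤ 1 / 2 := by nlinarith
  have hμT' : α * μ ≤ α * (4 * T) := mul_le_mul_of_nonneg_left (by nlinarith) hα.le
  have hsplit : α * (d k ^ 2 + μ) ≤ d k ^ 2 := by nlinarith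
  refine le_trans ?_ (div_add_le_dfInd (sq_nonneg _) hμ.le)
  rwa [le_div_iff₀ (by positivity)]

end GroupDegreesOfFreedom

section Orthogonal

variable {l m n R : Type*} [Fintype m] [Fintype n] [DecidableEq n]

section CommSemiring

variable [CommSemiring R]

lemma dotProduct_mulVec_mulVec_of_transpose_mul_self {U : Matrix m n R} (hU : Uᵀ * U = 1)
    (a b : n → R) :
    (U *ᵥ a) ⬝ᵥ (U *ᵥ b) = a ⬝ᵥ b := by
  rw [dotProduct_mulVec, ← mulVec_transpose, mulVec_mulVec, hU, one_mulVec]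

lemma diagonal_mulVec_eq_mul (s w : n → R) :
    diagonal s *ᵥ w = s * w :=
  funext (mulVec_diagonal s w)

lemma transpose_mul_mul_cancel {U : Matrix m n R} (hU : Uᵀ * U = 1)
    (M : Matrix n l R) : Uᵀ * (U * M) = M := by
  rw [← Matrix.mul_assoc, hU, Matrix.one_mul]

lemma conj_diagonal_mul_conj_diagonal {V : Matrix n n R} (hV : Vᵀ * V = 1) (a b : n → R) :
    V * diagonal a * Vᵀ * (V * diagonal b * Vᵀ) = V * diagonal (a * b) * Vᵀ := by
  simp only [Matrix.mul_assoc, transpose_mul_mul_cancel hV]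
  rw [← Matrix.mul_assoc (diagonal a), diagonal_mul_diagonal]; rfl

end CommSemiring

variable [CommRing R]

lemma smul_one_eq_conj_diagonal {V : Matrix n n R} (hV : Vᵀ * V = 1) (c : R) :
    c • (1 : Matrix n n R) = V * diagonal (fun _ => c) * Vᵀ := by
  rw [← smul_one_eq_diagonal, Matrix.mul_smul, Matrix.mul_one, Matrix.smul_mul,
    mul_eq_one_comm.mp hV]

lemma dotProduct_self_sub_conj_diagonal_mulVec {U : Matrix m n R} (hU : Uᵀ * U = 1)
    (s : n → R) (y : m → R) :
    (y - (U * diagonal s * Uᵀ) *ᵥ y) ⬝ᵥ (y - (U * diagonal s * Uᵀ) *ᵥ y)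
      = y ⬝ᵥ y - ∑ k, (2 * s k - s k ^ 2) * (Uᵀ *ᵥ y) k ^ 2 := by
  have hHy : (U * diagonal s * Uᵀ) *ᵥ y = U *ᵥ (s * (Uᵀ *ᵥ y)) := by
    rw [← mulVec_mulVec, ← mulVec_mulVec, diagonal_mulVec_eq_mul]
  have hy : ∀ a, y ⬝ᵥ (U *ᵥ a) = (Uᵀ *ᵥ y) ⬝ᵥ a := fun a => by
    rw [dotProduct_mulVec, mulVec_transpose]
  have hsum : ∑ k, (2 * s k - s k ^ 2) * (Uᵀ *ᵥ y) k ^ 2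
      = 2 * ((Uᵀ *ᵥ y) ⬝ᵥ (s * (Uᵀ *ᵥ y))) - (s * (Uᵀ *ᵥ y)) ⬝ᵥ (s * (Uᵀ *ᵥ y)) := by
    simp only [dotProduct, Pi.mul_apply, mul_sum, ← sum_sub_distrib]
    exact sum_congr rfl fun k _ => by ring
  rw [hHy, dotProduct_sub, sub_dotProduct, sub_dotProduct, dotProduct_comm (U *ᵥ _) y, hy,
    dotProduct_mulVec_mulVec_of_transpose_mul_self hU, hsum]
  ring

end Orthogonal

lemma inv_conj_diagonal {n K : Type*} [Fintype n] [DecidableEq n] [Field K]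
    {V : Matrix n n K} (hV : Vᵀ * V = 1) {a : n → K} (ha : ∀ k, a k ≠ 0) :
    (V * diagonal a * Vᵀ)⁻¹ = V * diagonal a⁻¹ * Vᵀ := by
  refine inv_eq_right_inv ?_
  have h1 : a * a⁻¹ = fun _ => 1 := funext fun k => mul_inv_cancel₀ (ha k)
  rw [conj_diagonal_mul_conj_diagonal hV, h1, ← smul_one_eq_conj_diagonal hV, one_smul]

section SingularValueDecomposition

variable {n p : ℕ} {X U : Matrix (Fin n) (Fin p) ℝ} {V : Matrix (Fin p) (Fin p) ℝ}
  {d : Fin p → ℝ} {m α μ : ℝ} {lam : Fin p → ℝ}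

lemma transpose_eq_of_svd (hX : X = U * diagonal d * Vᵀ) : Xᵀ = V * diagonal d * Uᵀ := by
  rw [hX, transpose_mul, transpose_mul, diagonal_transpose, transpose_transpose,
    Matrix.mul_assoc]

lemma transpose_mul_self_of_svd (hU : Uᵀ * U = 1) (hX : X = U * diagonal d * Vᵀ) :
    Xᵀ * X = V * diagonal (fun k => d k ^ 2) * Vᵀ := by
  rw [transpose_eq_of_svd hX, hX]
  simp only [Matrix.mul_assoc, transpose_mul_mul_cancel hU]
  rw [← Matrix.mul_assoc (diagonal d), diagonal_mul_diagonal]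
  simp only [sq]

lemma ridge_hat_of_svd (hU : Uᵀ * U = 1) (hV : Vᵀ * V = 1) (hX : X = U * diagonal d * Vᵀ)
    (hμ : 0 < μ) :
    X * ((Xᵀ * X + μ • 1)⁻¹ * Xᵀ) = U * diagonal (fun k => d k ^ 2 / (d k ^ 2 + μ)) * Uᵀ := by
  have hpos : ∀ k, d k ^ 2 + μ ≠ 0 := fun k => by positivity
  rw [transpose_mul_self_of_svd hU hX, smul_one_eq_conj_diagonal hV, ← Matrix.add_mul,
    ← Matrix.mul_add, diagonal_add, inv_conj_diagonal hV hpos, transpose_eq_of_svd hX, hX]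
  simp only [Matrix.mul_assoc, transpose_mul_mul_cancel hV]
  rw [← Matrix.mul_assoc (diagonal _) (diagonal d), diagonal_mul_diagonal,
    ← Matrix.mul_assoc (diagonal d), diagonal_mul_diagonal]
  congr 3; ext k; simp only [Pi.inv_apply]; ring

lemma rssGroup_of_svd (hU : Uᵀ * U = 1) (hV : Vᵀ * V = 1) (hX : X = U * diagonal d * Vᵀ)
    (hμ : 0 < μ) (y : Fin n → ℝ) :
    rssGroup X μ y = y ⬝ᵥ y - ∑ k, dfInd (d k ^ 2) μ * (Uᵀ *ᵥ y) k ^ 2 := by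
  rw [rssGroup, mulVec_mulVec, ridge_hat_of_svd hU hV hX hμ,
    dotProduct_self_sub_conj_diagonal_mulVec hU]
  simp only [dfInd_eq_two_mul_sub_sq]

lemma col_dotProduct_self_of_svd (hU : Uᵀ * U = 1) (hX : X = U * diagonal d * Vᵀ) (j : Fin p) :
    (fun i => X i j) ⬝ᵥ (fun i => X i j) = ∑ k, (V j k * d k) ^ 2 := by
  change (Xᵀ * X) j j = _
  rw [transpose_mul_self_of_svd hU hX, mul_apply]
  exact sum_congr rfl fun k _ => by rw [mul_diagonal, transpose_apply]; ring

lemma sum_col_dotProduct_self_of_svd (hU : Uᵀ * U = 1) (hV : Vᵀ * V = 1)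
    (hX : X = U * diagonal d * Vᵀ) :
    ∑ j, (fun i => X i j) ⬝ᵥ (fun i => X i j) = ∑ k, d k ^ 2 := by
  change trace (Xᵀ * X) = _
  rw [transpose_mul_self_of_svd hU hX, trace_mul_comm, ← Matrix.mul_assoc, hV, Matrix.one_mul,
    trace_diagonal]

lemma transpose_mulVec_of_svd (hX : X = U * diagonal d * Vᵀ) (y : Fin n → ℝ) :
    Xᵀ *ᵥ y = V *ᵥ (d * (Uᵀ *ᵥ y)) := by
  rw [transpose_eq_of_svd hX, ← mulVec_mulVec, ← mulVec_mulVec, diagonal_mulVec_eq_mul]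

lemma sum_sq_col_dotProduct_of_svd (hV : Vᵀ * V = 1) (hX : X = U * diagonal d * Vᵀ)
    (y : Fin n → ℝ) :
    ∑ j, ((fun i => X i j) ⬝ᵥ y) ^ 2 = ∑ k, d k ^ 2 * (Uᵀ *ᵥ y) k ^ 2 := by
  calc ∑ j, ((fun i => X i j) ⬝ᵥ y) ^ 2 = (Xᵀ *ᵥ y) ⬝ᵥ (Xᵀ *ᵥ y) :=
        sum_congr rfl fun j _ => sq _
    _ = (d * (Uᵀ *ᵥ y)) ⬝ᵥ (d * (Uᵀ *ᵥ y)) := by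
        rw [transpose_mulVec_of_svd hX, dotProduct_mulVec_mulVec_of_transpose_mul_self hV]
    _ = ∑ k, d k ^ 2 * (Uᵀ *ᵥ y) k ^ 2 :=
        sum_congr rfl fun k _ => by simp only [Pi.mul_apply]; ring

lemma sq_col_dotProduct_le_of_svd (hU : Uᵀ * U = 1) (hX : X = U * diagonal d * Vᵀ)
    (y : Fin n → ℝ) (j : Fin p) :
    ((fun i => X i j) ⬝ᵥ y) ^ 2 ≤ ((fun i => X i j) ⬝ᵥ (fun i => X i j))
      * ∑ k, (Function.support d).indicator (Uᵀ *ᵥ y) k ^ 2 := by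
  have ht : (fun i => X i j) ⬝ᵥ y
      = ∑ k, V j k * d k * (Function.support d).indicator (Uᵀ *ᵥ y) k := by
    change (Xᵀ *ᵥ y) j = _
    rw [transpose_mulVec_of_svd hX, mulVec, dotProduct]
    refine sum_congr rfl fun k _ => ?_
    by_cases hk : d k = 0 <;> simp [hk, mul_assoc]
  rw [ht, col_dotProduct_self_of_svd hU hX]
  exact sum_mul_sq_le_sq_mul_sq _ _ _

lemma exists_rssInd_le_rssGroup_of_svd (hU : Uᵀ * U = 1) (hV : Vᵀ * V = 1)
    (hX : X = U * diagonal d * Vᵀ) (hm : 0 < m) (hmd : ∀ k, d k ≠ 0 → m ≤ d k ^ 2)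
    (hα : α ∈ Set.Ioo 0 1) (hαm : (1 - α) * ∑ k, d k ^ 2 ≤ α * m) (hμ : 0 ≤ μ)
    (hdfi : ∀ j, dfInd ((fun i => X i j) ⬝ᵥ fun i => X i j) (lam j) = α)
    (hdfg : dfGroup d μ = 1 - α) (y : Fin n → ℝ) :
    ∃ j, rssInd (fun i => X i j) (lam j) y ≤ rssGroup X μ y := by
  set gain : Fin p → ℝ :=
    fun j => ((fun i => X i j) ⬝ᵥ y) ^ 2 / ((fun i => X i j) ⬝ᵥ fun i => X i j)
  set Q := ∑ k, (Function.support d).indicator (Uᵀ *ᵥ y) k ^ 2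
  obtain ⟨k, -, -⟩ : ∃ k ∈ univ, dfInd (d k ^ 2) μ ≠ 0 :=
    exists_ne_zero_of_sum_ne_zero (by rw [← dfGroup_eq_sum_dfInd, hdfg]; linarith [hα.2])
  obtain ⟨j, -, hj⟩ := exists_max_image univ gain ⟨k, mem_univ k⟩
  have hgain : 0 ≤ gain j := div_nonneg (sq_nonneg _) (dotProduct_self_star_nonneg _)
  have hQ : m * Q ≤ (∑ k, d k ^ 2) * gain j := calc
    m * Q ≤ ∑ k, d k ^ 2 * (Uᵀ *ᵥ y) k ^ 2 := mul_sum_sq_indicator_support_le hmd _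
    _ = ∑ j, ((fun i => X i j) ⬝ᵥ fun i => X i j) * gain j := by
        rw [← sum_sq_col_dotProduct_of_svd hV hX]
        exact sum_congr rfl fun j _ => (dotProduct_self_mul_sq_div _ _).symm
    _ ≤ ∑ j', ((fun i => X i j') ⬝ᵥ fun i => X i j') * gain j :=
        sum_le_sum fun j' _ => mul_le_mul_of_nonneg_left (hj j' (mem_univ _))
          (dotProduct_self_star_nonneg _)
    _ = (∑ k, d k ^ 2) * gain j := by rw [← sum_mul, sum_col_dotProduct_self_of_svd hU hV hX]
  have hgroup := sum_dfInd_mul_sq_le (d := d) hμ (Uᵀ *ᵥ y)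
  rw [hdfg] at hgroup
  have hkey : m * ((1 - α) * Q) ≤ m * (α * gain j) := calc
    m * ((1 - α) * Q) = (1 - α) * (m * Q) := by ring
    _ ≤ (1 - α) * ((∑ k, d k ^ 2) * gain j) := mul_le_mul_of_nonneg_left hQ (by linarith [hα.2])
    _ = ((1 - α) * ∑ k, d k ^ 2) * gain j := by ring
    _ ≤ (α * m) * gain j := mul_le_mul_of_nonneg_right hαm hgain
    _ = m * (α * gain j) := by ring
  refine ⟨j, ?_⟩
  rw [rssGroup_of_svd hU hV hX (pos_of_dfGroup_eq hα hμ hdfg), rssInd_eq_sub, hdfi j]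
  linarith [le_of_mul_le_mul_left hkey hm]

lemma rssGroup_le_rssInd_of_svd (hU : Uᵀ * U = 1) (hV : Vᵀ * V = 1)
    (hX : X = U * diagonal d * Vᵀ) (hm : 0 < m) (hmd : ∀ k, d k ≠ 0 → m ≤ d k ^ 2)
    (hα : α ∈ Set.Ioo 0 1) (hαm : α * (2 * m + 4 * ∑ k, d k ^ 2) ≤ m) (hμ : 0 ≤ μ)
    (hdfi : ∀ j, dfInd ((fun i => X i j) ⬝ᵥ fun i => X i j) (lam j) = α)
    (hdfg : dfGroup d μ = 1 - α) (y : Fin n → ℝ) (j : Fin p) :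
    rssGroup X μ y ≤ rssInd (fun i => X i j) (lam j) y := by
  have hμ' := pos_of_dfGroup_eq hα hμ hdfg
  have hgroup := mul_sum_sq_indicator_le_sum_dfInd (d := d)
    (fun k hk => le_dfInd_of_dfGroup_eq hm hα.1 hαm hμ' hdfg (hmd k hk)) (Uᵀ *ᵥ y)
  have hcol : ((fun i => X i j) ⬝ᵥ y) ^ 2 / ((fun i => X i j) ⬝ᵥ fun i => X i j)
      ≤ ∑ k, (Function.support d).indicator (Uᵀ *ᵥ y) k ^ 2 :=
    div_le_of_le_mul₀ (dotProduct_self_star_nonneg _) (sum_nonneg fun k _ => sq_nonneg _)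
      (by rw [mul_comm]; exact sq_col_dotProduct_le_of_svd hU hX y j)
  rw [rssGroup_of_svd hU hV hX hμ', rssInd_eq_sub, hdfi j]
  nlinarith [mul_le_mul_of_nonneg_left hcol hα.1.le]

end SingularValueDecomposition

theorem sparse_group_boosting_selection_intervals_general {n p : ℕ}
    (X U : Matrix (Fin n) (Fin p) ℝ) (V : Matrix (Fin p) (Fin p) ℝ)
    (d : Fin p → ℝ)
    (hU : Uᵀ * U = 1) (hV : Vᵀ * V = 1)
    (hX : X = U * Matrix.diagonal d * Vᵀ) :
    ∃ α₁ ∈ Set.Ioo (0 : ℝ) 1, ∃ α₂ ∈ Set.Ioo (0 : ℝ) 1,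
      (∀ (lam : Fin p → ℝ) (mu : ℝ), (∀ j, 0 ≤ lam j) → 0 ≤ mu →
        (∀ j : Fin p, dfInd ((fun i => X i j) ⬝ᵥ fun i => X i j) (lam j) = α₁) →
        dfGroup d mu = 1 - α₁ →
        ∀ y : Fin n → ℝ, ∃ j : Fin p,
          rssInd (fun i => X i j) (lam j) y ≤ rssGroup X mu y) ∧
      (∀ (lam : Fin p → ℝ) (mu : ℝ), (∀ j, 0 ≤ lam j) → 0 ≤ mu →
        (∀ j : Fin p, dfInd ((fun i => X i j) ⬝ᵥ fun i => X i j) (lam j) = α₂) →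
        dfGroup d mu = 1 - α₂ →
        ∀ (y : Fin n → ℝ) (j : Fin p),
          rssGroup X mu y ≤ rssInd (fun i => X i j) (lam j) y) := by
  obtain ⟨m, hm, hmd⟩ := exists_pos_le_sq_of_ne_zero d
  set T := ∑ k, d k ^ 2
  have hT : 0 ≤ T := sum_nonneg fun k _ => sq_nonneg (d k)
  have hα₁ : (T + m) / (T + 2 * m) ∈ Set.Ioo (0 : ℝ) 1 :=
    ⟨by positivity, (div_lt_one (by positivity)).mpr (by linarith)⟩
  have hα₂ : m / (2 * m + 4 * T) ∈ Set.Ioo (0 : ℝ) 1 :=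
    ⟨by positivity, (div_lt_one (by positivity)).mpr (by linarith)⟩
  refine ⟨_, hα₁, _, hα₂, fun lam mu _ hmu hdfi hdfg y => ?_,
    fun lam mu _ hmu hdfi hdfg y j => ?_⟩
  · refine exists_rssInd_le_rssGroup_of_svd hU hV hX hm hmd hα₁ ?_ hmu hdfi hdfg y
    rw [one_sub_div (by positivity : T + 2 * m ≠ 0), div_mul_eq_mul_div, div_mul_eq_mul_div,
      div_le_div_iff_of_pos_right (by positivity)]
    nlinarith
  · exact rssGroup_le_rssInd_of_svd hU hV hX hm hmd hα₂
      (div_mul_cancel₀ _ (by positivity)).le hmu hdfi hdfg y j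

/-- **Selection intervals of the sparse group boosting (existence part).**
For a design matrix `X = U D Vᵀ` of rank `r` with nonzero columns, there exist mixing
parameters `α₁, α₂ ∈ (0,1)` such that: (i) whenever `df(λⱼ) = α₁` for all `j` and
`df(μ) = 1 − α₁`, an individual base-learner always wins (`min_j RSS(λⱼ) ≤ RSS(μ)`), and
(ii) whenever `df(λⱼ) = α₂` for all `j` and `df(μ) = 1 − α₂`, the group base-learner always
wins (`RSS(μ) ≤ min_j RSS(λⱼ)`). -/
theorem sparse_group_boosting_selection_intervals {n p : ℕ} (hp : 0 < p)
    (r : ℕ) (hr : r ≤ p)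
    (X U : Matrix (Fin n) (Fin p) ℝ) (V : Matrix (Fin p) (Fin p) ℝ)
    (d : Fin p → ℝ)
    (hU : Uᵀ * U = 1) (hV : Vᵀ * V = 1)
    (hdpos : ∀ j : Fin p, (j : ℕ) < r → 0 < d j)
    (hdzero : ∀ j : Fin p, r ≤ (j : ℕ) → d j = 0)
    (hX : X = U * Matrix.diagonal d * Vᵀ)
    (hrank : X.rank = r)
    (hcol : ∀ j : Fin p, (fun i => X i j) ≠ 0) :
    ∃ α₁ ∈ Set.Ioo (0 : ℝ) 1, ∃ α₂ ∈ Set.Ioo (0 : ℝ) 1,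
      (∀ (lam : Fin p → ℝ) (mu : ℝ), (∀ j, 0 ≤ lam j) → 0 ≤ mu →
        (∀ j : Fin p, dfInd ((fun i => X i j) ⬝ᵥ fun i => X i j) (lam j) = α₁) →
        dfGroup d mu = 1 - α₁ →
        ∀ y : Fin n → ℝ, ∃ j : Fin p,
          rssInd (fun i => X i j) (lam j) y ≤ rssGroup X mu y) ∧
      (∀ (lam : Fin p → ℝ) (mu : ℝ), (∀ j, 0 ≤ lam j) → 0 ≤ mu →
        (∀ j : Fin p, dfInd ((fun i => X i j) ⬝ᵥ fun i => X i j) (lam j) = α₂) →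
        dfGroup d mu = 1 - α₂ →
        ∀ (y : Fin n → ℝ) (j : Fin p),
          rssGroup X mu y ≤ rssInd (fun i => X i j) (lam j) y) :=
  sparse_group_boosting_selection_intervals_general X U V d hU hV hX
end

section
/- Let X ∈ ℝ^{n×p} have singular value decomposition X = UD with V = I_p, i.e. X = UD where U has orthonormal columns and D = diag(d₁,…,d_r,0,…,0) with d₁,…,d_r > 0 (so the columns of X are orthogonal). Let λ₁,…,λ_p ≥ 0 and μ ≥ 0 be penalties. If df(μ) ≤ df(λ_j) for all j ≤ p, then for every y ∈ ℝⁿ, min_{j ≤ p} RSS(λ_j) ≤ RSS(μ). -/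
open Matrix Finset

lemma dfInd_eq' (dsq lam : ℝ) (h : dsq + lam ≠ 0) :
    dfInd dsq lam = (dsq ^ 2 + 2 * dsq * lam) / (dsq + lam) ^ 2 := by
  unfold dfInd; field_simp; ring

lemma dfInd_nonneg' {dsq lam : ℝ} (hd : 0 ≤ dsq) (hl : 0 ≤ lam) : 0 ≤ dfInd dsq lam := by
  by_cases h : dsq + lam = 0
  · have h1 : dsq = 0 := by linarith
    simp [dfInd, h1]
  · rw [dfInd_eq' _ _ h]; positivity

lemma quad_form_aux {n p : ℕ} (U : Matrix (Fin n) (Fin p) ℝ) (a : Fin p → ℝ) (y : Fin n → ℝ) :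
    y ⬝ᵥ ((U * diagonal a * Uᵀ) *ᵥ y) = ∑ j, a j * ((Uᵀ *ᵥ y) j) ^ 2 := by
  rw [← mulVec_mulVec, ← mulVec_mulVec, dotProduct_mulVec, ← mulVec_transpose]
  simp only [dotProduct, mulVec_diagonal]
  exact Finset.sum_congr rfl (fun j _ => by ring)

lemma rss_expand_aux {n p : ℕ} (U : Matrix (Fin n) (Fin p) ℝ) (hU : Uᵀ * U = 1)
    (a : Fin p → ℝ) (y : Fin n → ℝ) :
    (y - (U * diagonal a * Uᵀ) *ᵥ y) ⬝ᵥ (y - (U * diagonal a * Uᵀ) *ᵥ y)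
      = y ⬝ᵥ y - ∑ j, (2 * a j - a j ^ 2) * ((Uᵀ *ᵥ y) j) ^ 2 := by
  set M := U * diagonal a * Uᵀ with hM
  set f := M *ᵥ y with hf
  have h1 : y ⬝ᵥ f = ∑ j, a j * ((Uᵀ *ᵥ y) j) ^ 2 := quad_form_aux U a y
  have hMt : Mᵀ = M := by
    rw [hM, transpose_mul, transpose_mul, transpose_transpose, diagonal_transpose,
      ← Matrix.mul_assoc]
  have hMM : M * M = U * diagonal (fun j => a j * a j) * Uᵀ := by
    rw [hM]
    simp only [Matrix.mul_assoc]
    rw [← Matrix.mul_assoc Uᵀ U, hU, Matrix.one_mul,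
      ← Matrix.mul_assoc (diagonal a) (diagonal a), diagonal_mul_diagonal]
  have h2 : f ⬝ᵥ f = ∑ j, (a j * a j) * ((Uᵀ *ᵥ y) j) ^ 2 := by
    rw [hf, dotProduct_mulVec, ← mulVec_transpose, hMt, mulVec_mulVec, hMM,
      dotProduct_comm, quad_form_aux]
  have h3 : f ⬝ᵥ y = y ⬝ᵥ f := dotProduct_comm _ _
  have h4 : ∑ j, (2 * a j - a j ^ 2) * ((Uᵀ *ᵥ y) j) ^ 2
      = 2 * (∑ j, a j * ((Uᵀ *ᵥ y) j) ^ 2) - ∑ j, (a j * a j) * ((Uᵀ *ᵥ y) j) ^ 2 := by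
    rw [Finset.mul_sum, ← Finset.sum_sub_distrib]
    exact Finset.sum_congr rfl (fun j _ => by ring)
  rw [sub_dotProduct, dotProduct_sub, dotProduct_sub, h4]
  linarith

lemma diag_sandwich_aux {n p : ℕ} (U : Matrix (Fin n) (Fin p) ℝ) (u v w : Fin p → ℝ) :
    U * diagonal u * (diagonal v * (diagonal w * Uᵀ))
      = U * diagonal (fun j => u j * v j * w j) * Uᵀ := by
  simp only [Matrix.mul_assoc]
  rw [← Matrix.mul_assoc (diagonal v) (diagonal w), diagonal_mul_diagonal,
    ← Matrix.mul_assoc (diagonal u), diagonal_mul_diagonal]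
  congr 1
  congr 1
  funext j
  simp [mul_assoc]

/-- **Corollary (orthogonal columns, `V = I`).**
If `X = U D` with `U` having orthonormal columns and `D = diag(d₁,…,d_r,0,…,0)` (so the
columns of `X` are orthogonal), and `df(μ) ≤ df(λⱼ)` for all `j ≤ p`, then for every `y`,
`min_{j≤p} RSS(λⱼ) ≤ RSS(μ)`. -/
theorem individual_selection_orthogonal_columns {n p : ℕ} (hp : 0 < p)
    (r : ℕ) (hr : r ≤ p)
    (X U : Matrix (Fin n) (Fin p) ℝ)
    (d : Fin p → ℝ)
    (hU : Uᵀ * U = 1)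
    (hdpos : ∀ j : Fin p, (j : ℕ) < r → 0 < d j)
    (hdzero : ∀ j : Fin p, r ≤ (j : ℕ) → d j = 0)
    (hX : X = U * Matrix.diagonal d)
    (hrank : X.rank = r)
    (lam : Fin p → ℝ) (hlam : ∀ j, 0 ≤ lam j)
    (mu : ℝ) (hmu : 0 ≤ mu)
    (hcond : ∀ j : Fin p,
      dfGroup d mu ≤ dfInd ((fun i => X i j) ⬝ᵥ fun i => X i j) (lam j)) :
    ∀ y : Fin n → ℝ, ∃ j : Fin p,
      rssInd (fun i => X i j) (lam j) y ≤ rssGroup X mu y := by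
  intro y
  -- column facts
  have huu : ∀ j : Fin p, ∑ i, U i j * U i j = 1 := by
    intro j
    have h := congrFun (congrFun hU j) j
    simpa [Matrix.mul_apply, Matrix.one_apply] using h
  have hcol : ∀ (j : Fin p) (i : Fin n), X i j = d j * U i j := by
    intro j i
    rw [hX, Matrix.mul_diagonal, mul_comm]
  set c := Uᵀ *ᵥ y with hc
  have hcj : ∀ j : Fin p, (fun i => U i j) ⬝ᵥ y = c j := by
    intro j
    simp [hc, Matrix.mulVec, dotProduct, Matrix.transpose_apply]
  have hxx : ∀ j : Fin p, (fun i => X i j) ⬝ᵥ (fun i => X i j) = d j ^ 2 := by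
    intro j
    calc (fun i => X i j) ⬝ᵥ (fun i => X i j) = d j ^ 2 * ∑ i, U i j * U i j := by
          simp only [dotProduct, hcol, Finset.mul_sum]
          exact Finset.sum_congr rfl (fun i _ => by ring)
      _ = d j ^ 2 := by rw [huu j, mul_one]
  have hxy : ∀ j : Fin p, (fun i => X i j) ⬝ᵥ y = d j * c j := by
    intro j
    calc (fun i => X i j) ⬝ᵥ y = d j * ((fun i => U i j) ⬝ᵥ y) := by
          simp only [dotProduct, hcol, Finset.mul_sum]
          exact Finset.sum_congr rfl (fun i _ => by ring)
      _ = d j * c j := by rw [hcj j]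
  -- individual RSS formula
  have expand : ∀ (x : Fin n → ℝ) (b : ℝ),
      (y - b • x) ⬝ᵥ (y - b • x) = y ⬝ᵥ y - 2 * b * (x ⬝ᵥ y) + b ^ 2 * (x ⬝ᵥ x) := by
    intro x b
    simp only [sub_dotProduct, dotProduct_sub, smul_dotProduct, dotProduct_smul, smul_eq_mul,
      dotProduct_comm x y]
    ring
  have hrssInd : ∀ j : Fin p, rssInd (fun i => X i j) (lam j) y
      = y ⬝ᵥ y - (c j) ^ 2 * dfInd (d j ^ 2) (lam j) := by
    intro j
    unfold rssInd
    rw [expand, hxx, hxy]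
    by_cases h : d j ^ 2 + lam j = 0
    · have hd0 : d j = 0 := by nlinarith [sq_nonneg (d j), hlam j]
      simp [hd0, dfInd]
    · unfold dfInd
      field_simp
      ring
  -- group matrix facts
  have hXt : Xᵀ = diagonal d * Uᵀ := by rw [hX, transpose_mul, diagonal_transpose]
  have hXtX : Xᵀ * X = diagonal (fun j => d j ^ 2) := by
    rw [hXt, hX, Matrix.mul_assoc, ← Matrix.mul_assoc Uᵀ U, hU, Matrix.one_mul,
      diagonal_mul_diagonal,
      show (fun i => d i * d i) = fun j => d j ^ 2 from funext fun j => (pow_two (d j)).symm]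
  have hreg : Xᵀ * X + mu • (1 : Matrix (Fin p) (Fin p) ℝ) = diagonal (fun j => d j ^ 2 + mu) := by
    rw [hXtX, smul_one_eq_diagonal, ← diagonal_add]
  by_cases hinv : ∀ j : Fin p, d j ^ 2 + mu ≠ 0
  · -- regular case
    have hinvmat : (Xᵀ * X + mu • (1 : Matrix (Fin p) (Fin p) ℝ))⁻¹
        = diagonal (fun j => (d j ^ 2 + mu)⁻¹) := by
      rw [hreg]
      apply inv_eq_right_inv
      rw [diagonal_mul_diagonal,
        show (fun i => (d i ^ 2 + mu) * (d i ^ 2 + mu)⁻¹) = fun _ : Fin p => (1 : ℝ) from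
          funext fun i => mul_inv_cancel₀ (hinv i), diagonal_one]
    set a : Fin p → ℝ := fun j => d j * (d j ^ 2 + mu)⁻¹ * d j with ha
    have hM : X * ((Xᵀ * X + mu • (1 : Matrix (Fin p) (Fin p) ℝ))⁻¹ * Xᵀ)
        = U * diagonal a * Uᵀ := by
      rw [hinvmat, hXt, hX, diag_sandwich_aux, ha]
    have hrssG : rssGroup X mu y = y ⬝ᵥ y - ∑ j, (2 * a j - a j ^ 2) * (c j) ^ 2 := by
      unfold rssGroup
      rw [mulVec_mulVec, hM, rss_expand_aux U hU a y, ← hc]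
    have hterm : ∀ j : Fin p, 2 * a j - a j ^ 2 = dfInd (d j ^ 2) mu := by
      intro j
      unfold dfInd
      simp only [ha]
      field_simp
    have hdfG : dfGroup d mu = ∑ j, dfInd (d j ^ 2) mu := by
      unfold dfGroup dfInd
      exact Finset.sum_congr rfl (fun j _ => by ring_nf)
    have : Nonempty (Fin p) := Fin.pos_iff_nonempty.mp hp
    obtain ⟨j0, -, hj0⟩ := Finset.exists_max_image (univ : Finset (Fin p))
      (fun j => (c j) ^ 2) univ_nonempty
    have hsum : ∑ j, (2 * a j - a j ^ 2) * (c j) ^ 2 ≤ dfGroup d mu * (c j0) ^ 2 := by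
      calc ∑ j, (2 * a j - a j ^ 2) * (c j) ^ 2
          ≤ ∑ j, (2 * a j - a j ^ 2) * (c j0) ^ 2 := by
            apply Finset.sum_le_sum
            intro j _
            have hnn : 0 ≤ 2 * a j - a j ^ 2 := by
              rw [hterm j]; exact dfInd_nonneg' (sq_nonneg _) hmu
            exact mul_le_mul_of_nonneg_left (hj0 j (mem_univ j)) hnn
        _ = (∑ j, (2 * a j - a j ^ 2)) * (c j0) ^ 2 := by rw [← Finset.sum_mul]
        _ = dfGroup d mu * (c j0) ^ 2 := by
            rw [hdfG]
            congr 1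
            exact Finset.sum_congr rfl (fun j _ => hterm j)
    have hc' : dfGroup d mu ≤ dfInd (d j0 ^ 2) (lam j0) := by
      have := hcond j0
      rwa [hxx j0] at this
    have hfinal : dfGroup d mu * (c j0) ^ 2 ≤ (c j0) ^ 2 * dfInd (d j0 ^ 2) (lam j0) := by
      rw [mul_comm ((c j0) ^ 2)]
      exact mul_le_mul_of_nonneg_right hc' (sq_nonneg _)
    refine ⟨j0, ?_⟩
    rw [hrssInd j0, hrssG]
    linarith
  · -- singular case: the matrix inverse is 0, so RSS(μ) = yᵀy
    push_neg at hinv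
    obtain ⟨j1, hj1⟩ := hinv
    have hdet : ¬ IsUnit (Xᵀ * X + mu • (1 : Matrix (Fin p) (Fin p) ℝ)).det := by
      rw [hreg, det_diagonal]
      have hz : ∏ j, (d j ^ 2 + mu) = 0 := Finset.prod_eq_zero (mem_univ j1) hj1
      simp [hz]
    have h0 : (Xᵀ * X + mu • (1 : Matrix (Fin p) (Fin p) ℝ))⁻¹ = 0 :=
      Matrix.nonsing_inv_apply_not_isUnit _ hdet
    have hG : rssGroup X mu y = y ⬝ᵥ y := by
      unfold rssGroup
      rw [h0]
      simp
    refine ⟨⟨0, hp⟩, ?_⟩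
    rw [hrssInd ⟨0, hp⟩, hG]
    have hnn := mul_nonneg (sq_nonneg (c ⟨0, hp⟩))
      (dfInd_nonneg' (sq_nonneg (d ⟨0, hp⟩)) (hlam ⟨0, hp⟩))
    linarith
end
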